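/- arXiv:1903.00710 — 4 statements merged into one kernel-verified Lean document; each statement's English description precedes it below -/
import Mathlib

section
/- Let Θ ∈ ℝ^{n×n} be antisymmetric, J ∈ ℝ^{m×m} be antisymmetric, K ∈ ℝ^{n×n} be symmetric, and M ∈ ℝ^{m×n} arbitrary. Then the matrices A := 2Θ(K + MᵀJM) and B := 2ΘMᵀ satisfy the physical realizability condition AΘ + ΘAᵀ + BJBᵀ = 0. -/
open Matrix

/-- Physical realizability of the parameterization
`A = 2Θ(K + MᵀJM)`, `B = 2ΘMᵀ`. -/
theorem stmt_0 {n m : ℕ}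
    (Θ : Matrix (Fin n) (Fin n) ℝ) (J : Matrix (Fin m) (Fin m) ℝ)
    (K : Matrix (Fin n) (Fin n) ℝ) (M : Matrix (Fin m) (Fin n) ℝ)
    (hΘ : Θᵀ = -Θ) (hJ : Jᵀ = -J) (hK : Kᵀ = K)
    (A : Matrix (Fin n) (Fin n) ℝ) (B : Matrix (Fin n) (Fin m) ℝ)
    (hA : A = (2 : ℝ) • (Θ * (K + Mᵀ * J * M)))
    (hB : B = (2 : ℝ) • (Θ * Mᵀ)) :
    A * Θ + Θ * Aᵀ + B * J * Bᵀ = 0 := by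
  subst hA hB
  simp only [transpose_smul, transpose_mul, transpose_add, transpose_transpose, hΘ, hJ, hK]
  simp only [mul_add, add_mul, Matrix.mul_assoc, Matrix.neg_mul, Matrix.mul_neg,
    smul_mul_assoc, mul_smul_comm, smul_neg, smul_add, neg_neg, smul_smul, Matrix.smul_mul, Matrix.mul_smul]
  module
end

section
/- (Lemma 1, finite-index form.) If Q₁ and Q₂ are symmetric complex matrices indexed by ι, then the commutator of the corresponding quadratic forms is again such a quadratic form: [φ_{Q₁}, φ_{Q₂}] = φ_Q, where Q := 4i (Q₁ λ Q₂ − Q₂ λ Q₁) (products being matrix products), and moreover Q is symmetric. Hence the quadratic forms φ_Q with symmetric complex kernels Q form a Lie algebra under the commutator. -/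
open Finset Matrix

section Helpers

variable {A : Type*} [AddCommMonoid A] [Module ℂ A] {ι : Type*} [Fintype ι]

private lemma sw12 (g : ι → ι → ι → ι → A) :
    ∑ a, ∑ b, ∑ c, ∑ d, g a b c d = ∑ b, ∑ a, ∑ c, ∑ d, g a b c d :=
  Finset.sum_comm

private lemma sw23 (g : ι → ι → ι → ι → A) :
    ∑ a, ∑ b, ∑ c, ∑ d, g a b c d = ∑ a, ∑ c, ∑ b, ∑ d, g a b c d :=
  Finset.sum_congr rfl fun _ _ => Finset.sum_comm

private lemma sw34 (g : ι → ι → ι → ι → A) :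
    ∑ a, ∑ b, ∑ c, ∑ d, g a b c d = ∑ a, ∑ b, ∑ d, ∑ c, g a b c d :=
  Finset.sum_congr rfl fun _ _ => Finset.sum_congr rfl fun _ _ => Finset.sum_comm

private lemma collect_aux (f : ι → ι → ι → ι → ℂ) (v : ι → ι → A) :
    ∑ a, ∑ b, ∑ c, ∑ d, f a b c d • v a d
      = ∑ a, ∑ d, (∑ b, ∑ c, f a b c d) • v a d := by
  refine Finset.sum_congr rfl fun a _ => ?_
  calc ∑ b, ∑ c, ∑ d, f a b c d • v a d
      = ∑ b, ∑ d, ∑ c, f a b c d • v a d :=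
        Finset.sum_congr rfl fun _ _ => Finset.sum_comm
    _ = ∑ d, ∑ b, ∑ c, f a b c d • v a d := Finset.sum_comm
    _ = ∑ d, (∑ b, ∑ c, f a b c d) • v a d := by
        simp only [Finset.sum_smul]

private lemma C2 (f : ι → ι → ι → ι → ℂ) (v : ι → ι → A) :
    ∑ a, ∑ b, ∑ c, ∑ d, f a b c d • v b d
      = ∑ x, ∑ y, (∑ a, ∑ c, f a x c y) • v x y := by
  rw [sw12 (fun a b c d => f a b c d • v b d)]
  exact collect_aux (fun b a c d => f a b c d) v

private lemma C3 (f : ι → ι → ι → ι → ℂ) (v : ι → ι → A) :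
    ∑ a, ∑ b, ∑ c, ∑ d, f a b c d • v c a
      = ∑ x, ∑ y, (∑ b, ∑ d, f y b x d) • v x y := by
  calc ∑ a, ∑ b, ∑ c, ∑ d, f a b c d • v c a
      = ∑ a, ∑ c, ∑ b, ∑ d, f a b c d • v c a :=
        sw23 (fun a b c d => f a b c d • v c a)
    _ = ∑ c, ∑ a, ∑ b, ∑ d, f a b c d • v c a :=
        sw12 (fun a c b d => f a b c d • v c a)
    _ = ∑ c, ∑ b, ∑ a, ∑ d, f a b c d • v c a :=
        sw23 (fun c a b d => f a b c d • v c a)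
    _ = ∑ c, ∑ b, ∑ d, ∑ a, f a b c d • v c a :=
        sw34 (fun c b a d => f a b c d • v c a)
    _ = ∑ x, ∑ y, (∑ b, ∑ d, f y b x d) • v x y :=
        collect_aux (fun c b d a => f a b c d) v

private lemma C4 (f : ι → ι → ι → ι → ℂ) (v : ι → ι → A) :
    ∑ a, ∑ b, ∑ c, ∑ d, f a b c d • v c b
      = ∑ x, ∑ y, (∑ a, ∑ d, f a y x d) • v x y := by
  calc ∑ a, ∑ b, ∑ c, ∑ d, f a b c d • v c b
      = ∑ a, ∑ c, ∑ b, ∑ d, f a b c d • v c b :=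
        sw23 (fun a b c d => f a b c d • v c b)
    _ = ∑ c, ∑ a, ∑ b, ∑ d, f a b c d • v c b :=
        sw12 (fun a c b d => f a b c d • v c b)
    _ = ∑ c, ∑ a, ∑ d, ∑ b, f a b c d • v c b :=
        sw34 (fun c a b d => f a b c d • v c b)
    _ = ∑ x, ∑ y, (∑ a, ∑ d, f a y x d) • v x y :=
        collect_aux (fun c a d b => f a b c d) v

end Helpers

/-- Lemma 1, finite-index form: the commutator of two quadratic forms
with symmetric kernels `Q₁`, `Q₂` is the quadratic form with symmetric kernel
`Q = 4i(Q₁ λ Q₂ - Q₂ λ Q₁)`. -/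
theorem stmt_4 {A : Type*} [Ring A] [Algebra ℂ A] {ι : Type*} [Fintype ι]
    (X : ι → A) (lam : Matrix ι ι ℂ)
    (hlam : ∀ a b, lam a b = - lam b a)
    (hCCR : ∀ a b, X a * X b - X b * X a = (2 * Complex.I * lam a b) • (1 : A))
    (Q₁ Q₂ : Matrix ι ι ℂ)
    (hQ₁ : ∀ a b, Q₁ a b = Q₁ b a) (hQ₂ : ∀ a b, Q₂ a b = Q₂ b a)
    (Q : Matrix ι ι ℂ)
    (hQ : Q = (4 * Complex.I) • (Q₁ * lam * Q₂ - Q₂ * lam * Q₁)) :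
    ((∑ a, ∑ b, Q₁ a b • (X a * X b)) * (∑ a, ∑ b, Q₂ a b • (X a * X b))
        - (∑ a, ∑ b, Q₂ a b • (X a * X b)) * (∑ a, ∑ b, Q₁ a b • (X a * X b))
      = ∑ a, ∑ b, Q a b • (X a * X b))
    ∧ (∀ a b, Q a b = Q b a) := by
  have hQsymm : ∀ a b, Q a b = Q b a := by
    intro a b
    rw [hQ]
    simp only [Matrix.smul_apply, Matrix.sub_apply, smul_eq_mul]
    congr 1
    have h1 : ∀ (M N : Matrix ι ι ℂ) (hM : ∀ a b, M a b = M b a) (hN : ∀ a b, N a b = N b a)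
        (x y : ι), (M * lam * N) x y = -((N * lam * M) y x) := by
      intro M N hM hN x y
      simp only [Matrix.mul_apply, Finset.sum_mul, Finset.mul_sum, ← Finset.sum_neg_distrib]
      rw [Finset.sum_comm]
      refine Finset.sum_congr rfl fun j _ => Finset.sum_congr rfl fun k _ => ?_
      rw [hM x j, hN k y, hlam j k]
      ring
    rw [h1 Q₁ Q₂ hQ₁ hQ₂ a b, h1 Q₂ Q₁ hQ₂ hQ₁ a b]
    ring
  refine ⟨?_, hQsymm⟩
  -- basic relations
  have L1 : ∀ a b c, X a * X b * X c - X c * (X a * X b)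
      = (2 * Complex.I * lam b c) • X a + (2 * Complex.I * lam a c) • X b := by
    intro a b c
    have key : X a * X b * X c - X c * (X a * X b)
        = X a * (X b * X c - X c * X b) + (X a * X c - X c * X a) * X b := by
      noncomm_ring
    rw [key, hCCR, hCCR, mul_smul_comm, smul_mul_assoc, mul_one, one_mul]
  have comm4 : ∀ a b c d, X a * X b * (X c * X d) - X c * X d * (X a * X b)
      = (2 * Complex.I * lam b c) • (X a * X d) + (2 * Complex.I * lam a c) • (X b * X d)
        + (2 * Complex.I * lam b d) • (X c * X a) + (2 * Complex.I * lam a d) • (X c * X b) := by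
    intro a b c d
    have key : X a * X b * (X c * X d) - X c * X d * (X a * X b)
        = (X a * X b * X c - X c * (X a * X b)) * X d
          + X c * (X a * X b * X d - X d * (X a * X b)) := by
      noncomm_ring
    rw [key, L1 a b c, L1 a b d]
    simp only [add_mul, mul_add, smul_mul_assoc, mul_smul_comm]
    abel
  -- expand the product of sums
  have step1 : (∑ a, ∑ b, Q₁ a b • (X a * X b)) * (∑ a, ∑ b, Q₂ a b • (X a * X b))
      - (∑ a, ∑ b, Q₂ a b • (X a * X b)) * (∑ a, ∑ b, Q₁ a b • (X a * X b))
      = ∑ a, ∑ b, ∑ c, ∑ d, (Q₁ a b * Q₂ c d) •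
          (X a * X b * (X c * X d) - X c * X d * (X a * X b)) := by
    rw [Finset.sum_mul, Finset.mul_sum, ← Finset.sum_sub_distrib]
    refine Finset.sum_congr rfl fun a _ => ?_
    rw [Finset.sum_mul, Finset.mul_sum, ← Finset.sum_sub_distrib]
    refine Finset.sum_congr rfl fun b _ => ?_
    rw [smul_mul_assoc, mul_smul_comm, ← smul_sub]
    rw [Finset.mul_sum, Finset.sum_mul, ← Finset.sum_sub_distrib, Finset.smul_sum]
    refine Finset.sum_congr rfl fun c _ => ?_
    rw [Finset.mul_sum, Finset.sum_mul, ← Finset.sum_sub_distrib, Finset.smul_sum]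
    refine Finset.sum_congr rfl fun d _ => ?_
    rw [mul_smul_comm, smul_mul_assoc, ← smul_sub, smul_smul]
  rw [step1]
  simp only [comm4, smul_add, smul_smul, Finset.sum_add_distrib]
  rw [collect_aux (fun a b c d => Q₁ a b * Q₂ c d * (2 * Complex.I * lam b c))
        (fun x y => X x * X y),
      C2 (fun a b c d => Q₁ a b * Q₂ c d * (2 * Complex.I * lam a c))
        (fun x y => X x * X y),
      C3 (fun a b c d => Q₁ a b * Q₂ c d * (2 * Complex.I * lam b d))
        (fun x y => X x * X y),
      C4 (fun a b c d => Q₁ a b * Q₂ c d * (2 * Complex.I * lam a d))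
        (fun x y => X x * X y)]
  have hK : ∀ x y : ι,
      (∑ b, ∑ c, (Q₁ x b * Q₂ c y * (2 * Complex.I * lam b c)
        + Q₁ b x * Q₂ c y * (2 * Complex.I * lam b c)
        + Q₁ y b * Q₂ x c * (2 * Complex.I * lam b c)
        + Q₁ b y * Q₂ x c * (2 * Complex.I * lam b c))) = Q x y := by
    intro x y
    simp only [Finset.sum_add_distrib]
    have e1 : (∑ b, ∑ c, Q₁ x b * Q₂ c y * (2 * Complex.I * lam b c))
        = ∑ c, ∑ b, 2 * Complex.I * (Q₁ x b * lam b c * Q₂ c y) := by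
      rw [Finset.sum_comm]
      exact Finset.sum_congr rfl fun c _ => Finset.sum_congr rfl fun b _ => by ring
    have e2 : (∑ a, ∑ c, Q₁ a x * Q₂ c y * (2 * Complex.I * lam a c))
        = ∑ c, ∑ b, 2 * Complex.I * (Q₁ x b * lam b c * Q₂ c y) := by
      rw [Finset.sum_comm]
      refine Finset.sum_congr rfl fun c _ => Finset.sum_congr rfl fun a _ => ?_
      rw [hQ₁ a x]; ring
    have e3 : (∑ b, ∑ d, Q₁ y b * Q₂ x d * (2 * Complex.I * lam b d))
        = ∑ c, ∑ b, -(2 * Complex.I) * (Q₂ x b * lam b c * Q₁ c y) := by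
      refine Finset.sum_congr rfl fun u _ => Finset.sum_congr rfl fun w _ => ?_
      rw [hQ₁ y u, hlam u w]; ring
    have e4 : (∑ a, ∑ d, Q₁ a y * Q₂ x d * (2 * Complex.I * lam a d))
        = ∑ c, ∑ b, -(2 * Complex.I) * (Q₂ x b * lam b c * Q₁ c y) := by
      refine Finset.sum_congr rfl fun u _ => Finset.sum_congr rfl fun w _ => ?_
      rw [hlam u w]; ring
    rw [e1, e2, e3, e4, hQ]
    simp only [Matrix.smul_apply, Matrix.sub_apply, smul_eq_mul, Matrix.mul_apply,
      Finset.sum_mul, mul_sub, Finset.mul_sum, ← Finset.sum_sub_distrib,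
      ← Finset.sum_add_distrib]
    refine Finset.sum_congr rfl fun c _ => ?_
    refine Finset.sum_congr rfl fun b _ => ?_
    ring
  simp only [← Finset.sum_add_distrib, ← add_smul]
  refine Finset.sum_congr rfl fun x _ => Finset.sum_congr rfl fun y _ => ?_
  rw [hK x y]
end

section
/- Let θ ∈ ℝ and let φ : ℝ → ℂ^{n×n} be differentiable at t with derivative ψ := φ'(t). Then d/dt exp(θ·φ(t)) = θ · exp((θ/2)φ(t)) · Ψ · exp((θ/2)φ(t)), where Ψ := ∫_{−1/2}^{1/2} exp(uθ·φ(t)) · ψ · exp(−uθ·φ(t)) du (entrywise integral). -/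
open Matrix NormedSpace MeasureTheory intervalIntegral Filter Topology

attribute [local instance] Matrix.linftyOpNormedAddCommGroup Matrix.linftyOpNormedRing
  Matrix.linftyOpNormedAlgebra

variable {n : ℕ}

local notation "𝕄" => Matrix (Fin n) (Fin n) ℂ

section

noncomputable local instance uniM : UniformSpace 𝕄 := PseudoMetricSpace.toUniformSpace

noncomputable local instance topM : TopologicalSpace 𝕄 := uniM.toTopologicalSpace

noncomputable local instance : CompleteSpace 𝕄 := FiniteDimensional.complete ℂ _

lemma key0 (X : 𝕄) (c : ℝ) :
    HasDerivAt (fun s : ℝ => exp ((s : ℂ) • X)) (exp ((c : ℂ) • X) * X) c := by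
  have h := hasDerivAt_exp_smul_const (𝕂 := ℝ) (𝔸 := 𝕄) X c
  have e : ∀ s : ℝ, ((s : ℂ) • X) = s • X := fun s => (algebraMap_smul ℂ s X)
  simp only [e]
  exact h

lemma expcont (X : 𝕄) : Continuous (fun s : ℝ => exp ((s : ℂ) • X)) :=
  exp_continuous.comp ((Complex.continuous_ofReal).smul continuous_const)

lemma duhamel (X Y : 𝕄) :
    exp Y - exp X
      = ∫ s in (0:ℝ)..1, exp ((s : ℂ) • Y) * (Y - X) * exp (((1 - s : ℝ) : ℂ) • X) := by
  have hf : ∀ s : ℝ,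
      HasDerivAt (fun s : ℝ => exp ((s : ℂ) • Y) * exp (((1 - s : ℝ) : ℂ) • X))
        (exp ((s : ℂ) • Y) * (Y - X) * exp (((1 - s : ℝ) : ℂ) • X)) s := by
    intro s
    have h1 := key0 Y s
    have h3 : HasDerivAt (fun s : ℝ => (1 - s : ℝ)) (-1) s := by
      simpa using (hasDerivAt_id s).const_sub 1
    have h2 : HasDerivAt (fun s : ℝ => exp (((1 - s : ℝ) : ℂ) • X))
        ((-1 : ℝ) • (exp (((1 - s : ℝ) : ℂ) • X) * X)) s :=
      (key0 X (1 - s)).scomp s h3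
    have hcomm : X * exp (((1 - s : ℝ) : ℂ) • X) = exp (((1 - s : ℝ) : ℂ) • X) * X :=
      (((Commute.refl X).smul_right (((1 - s : ℝ) : ℂ))).exp_right).eq
    have h := h1.mul h2
    refine h.congr_deriv ?_
    simp only [neg_one_smul, mul_neg, sub_mul, mul_sub, mul_assoc, hcomm]
    abel
  have hcont : Continuous (fun s : ℝ =>
      exp ((s : ℂ) • Y) * (Y - X) * exp (((1 - s : ℝ) : ℂ) • X)) := by
    refine ((expcont Y).mul continuous_const).mul ?_
    exact exp_continuous.comp ((Complex.continuous_ofReal.comp (continuous_const.sub continuous_id)).smul continuous_const)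
  have h := intervalIntegral.integral_eq_sub_of_hasDerivAt (fun s _ => hf s)
    (hcont.intervalIntegrable 0 1)
  rw [h]
  norm_num [exp_zero]

lemma norm_exp_le [NeZero n] (x : 𝕄) : ‖exp x‖ ≤ Real.exp ‖x‖ := by
  haveI : Nonempty (Fin n) := Fin.pos_iff_nonempty.mp (NeZero.pos n)
  rw [exp_eq_tsum ℂ]
  refine (norm_tsum_le_tsum_norm (norm_expSeries_summable' (𝕂 := ℂ) x)).trans ?_
  rw [Real.exp_eq_exp_ℝ, exp_eq_tsum ℝ]
  refine Summable.tsum_le_tsum (fun k => ?_) (norm_expSeries_summable' (𝕂 := ℂ) x)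
    (expSeries_summable' (𝕂 := ℝ) ‖x‖)
  rw [norm_smul, smul_eq_mul]
  have h1 : ‖((k.factorial : ℂ))⁻¹‖ = ((k.factorial : ℝ))⁻¹ := by
    rw [norm_inv]; simp
  rw [h1]
  gcongr
  exact norm_pow_le x k


lemma main_deriv [NeZero n] (X : ℝ → 𝕄) (D : 𝕄) (t : ℝ) (hX : HasDerivAt X D t) :
    HasDerivAt (fun τ => exp (X τ))
      (∫ s in (0:ℝ)..1, exp ((s : ℂ) • X t) * D * exp (((1 - s : ℝ) : ℂ) • X t)) t := by
  rw [hasDerivAt_iff_tendsto_slope]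
  have hslope : Tendsto (slope X t) (𝓝[≠] t) (𝓝 D) := hasDerivAt_iff_tendsto_slope.mp hX
  have hXc : Tendsto X (𝓝[≠] t) (𝓝 (X t)) :=
    (hX.continuousAt.tendsto).mono_left nhdsWithin_le_nhds
  have heq : ∀ᶠ τ in 𝓝[≠] t, (∫ s in (0:ℝ)..1,
      exp ((s : ℂ) • X τ) * slope X t τ * exp (((1 - s : ℝ) : ℂ) • X t))
        = slope (fun τ => exp (X τ)) t τ := by
    filter_upwards [self_mem_nhdsWithin] with τ hτ
    rw [slope_def_module (fun τ => exp (X τ)), duhamel (X t) (X τ),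
      ← intervalIntegral.integral_smul]
    refine intervalIntegral.integral_congr fun s _ => ?_
    rw [slope_def_module, mul_smul_comm, smul_mul_assoc]
  refine Tendsto.congr' heq ?_
  refine intervalIntegral.tendsto_integral_filter_of_dominated_convergence
    (fun _ => Real.exp (‖X t‖ + 1) * (‖D‖ + 1) * Real.exp ‖X t‖) ?_ ?_ ?_ ?_
  · filter_upwards with τ
    refine Continuous.aestronglyMeasurable ?_
    exact ((expcont (X τ)).mul continuous_const).mul
      (exp_continuous.comp ((Complex.continuous_ofReal.comp
        (continuous_const.sub continuous_id)).smul continuous_const))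
  · have h1 : ∀ᶠ τ in 𝓝[≠] t, ‖X τ‖ < ‖X t‖ + 1 :=
      (hXc.norm).eventually_lt_const (by linarith)
    have h2 : ∀ᶠ τ in 𝓝[≠] t, ‖slope X t τ‖ < ‖D‖ + 1 :=
      (hslope.norm).eventually_lt_const (by linarith)
    filter_upwards [h1, h2] with τ hτ1 hτ2
    refine Filter.Eventually.of_forall fun s hs => ?_
    rw [Set.uIoc_of_le (by norm_num : (0:ℝ) ≤ 1)] at hs
    obtain ⟨hs0, hs1⟩ := hs
    have e1 : ‖exp ((s : ℂ) • X τ)‖ ≤ Real.exp (‖X t‖ + 1) := by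
      refine (norm_exp_le _).trans (Real.exp_le_exp.mpr ?_)
      rw [norm_smul, Complex.norm_real, Real.norm_eq_abs]
      calc |s| * ‖X τ‖ ≤ 1 * ‖X τ‖ := by
            gcongr; rw [abs_of_pos hs0]; exact hs1
        _ ≤ ‖X t‖ + 1 := by rw [one_mul]; linarith
    have e2 : ‖exp (((1 - s : ℝ) : ℂ) • X t)‖ ≤ Real.exp ‖X t‖ := by
      refine (norm_exp_le _).trans (Real.exp_le_exp.mpr ?_)
      rw [norm_smul, Complex.norm_real, Real.norm_eq_abs]
      calc |1 - s| * ‖X t‖ ≤ 1 * ‖X t‖ := by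
            gcongr; rw [abs_of_nonneg (by linarith)]; linarith
        _ = ‖X t‖ := one_mul _
    calc ‖exp ((s : ℂ) • X τ) * slope X t τ * exp (((1 - s : ℝ) : ℂ) • X t)‖
        ≤ ‖exp ((s : ℂ) • X τ) * slope X t τ‖ * ‖exp (((1 - s : ℝ) : ℂ) • X t)‖ :=
          norm_mul_le _ _
      _ ≤ (‖exp ((s : ℂ) • X τ)‖ * ‖slope X t τ‖) * ‖exp (((1 - s : ℝ) : ℂ) • X t)‖ := by
          gcongr; exact norm_mul_le _ _
      _ ≤ Real.exp (‖X t‖ + 1) * (‖D‖ + 1) * Real.exp ‖X t‖ := by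
          gcongr
  · exact intervalIntegrable_const
  · refine Filter.Eventually.of_forall fun s _ => ?_
    refine Tendsto.mul_const _ (Tendsto.mul ?_ hslope)
    exact (exp_continuous.tendsto _).comp (hXc.const_smul ((s : ℂ)))


noncomputable def entryCLM (i j : Fin n) : 𝕄 →L[ℝ] ℂ :=
  LinearMap.toContinuousLinearMap
    { toFun := fun M => M i j
      map_add' := fun _ _ => rfl
      map_smul' := fun _ _ => rfl }

lemma hasDerivAt_entry {f : ℝ → 𝕄} {f' : 𝕄} {t : ℝ} (h : HasDerivAt f f' t) (i j : Fin n) :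
    HasDerivAt (fun τ => f τ i j) (f' i j) t := by
  have := (entryCLM i j).hasFDerivAt.comp_hasDerivAt t h
  exact this

noncomputable def matrixPiCLE : 𝕄 ≃L[ℝ] (Fin n → Fin n → ℂ) :=
  LinearEquiv.toContinuousLinearEquiv
    { toFun := fun M i j => M i j
      invFun := fun g => Matrix.of g
      map_add' := fun _ _ => rfl
      map_smul' := fun _ _ => rfl
      left_inv := fun _ => rfl
      right_inv := fun _ => rfl }

@[simp] lemma matrixPiCLE_apply (M : 𝕄) : matrixPiCLE M = fun i j => M i j := rfl

@[simp] lemma matrixPiCLE_symm_apply (g : Fin n → Fin n → ℂ) :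
    matrixPiCLE.symm g = Matrix.of g := rfl

lemma clm_comp_hasDerivAt {E F : Type*} [NormedAddCommGroup E] [NormedSpace ℝ E]
    [NormedAddCommGroup F] [NormedSpace ℝ F] (L : E →L[ℝ] F) {f : ℝ → E} {f' : E} {t : ℝ}
    (h : HasDerivAt f f' t) : HasDerivAt (fun τ => L (f τ)) (L f') t := by
  exact L.hasFDerivAt.comp_hasDerivAt t h

lemma hasDerivAt_of_entries {f : ℝ → 𝕄} {f' : 𝕄} {t : ℝ}
    (h : ∀ i j, HasDerivAt (fun τ => f τ i j) (f' i j) t) : HasDerivAt f f' t := by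
  have hp : HasDerivAt (fun τ => matrixPiCLE (f τ)) (matrixPiCLE f') t := by
    simp only [matrixPiCLE_apply]
    exact hasDerivAt_pi.mpr fun i => hasDerivAt_pi.mpr fun j => h i j
  have h2 := clm_comp_hasDerivAt (matrixPiCLE.symm : (Fin n → Fin n → ℂ) ≃L[ℝ] 𝕄).toContinuousLinearMap hp
  exact h2

lemma entry_integral {f : ℝ → 𝕄} {a b : ℝ} (hf : IntervalIntegrable f volume a b) (i j : Fin n) :
    (∫ s in a..b, f s) i j = ∫ s in a..b, f s i j := by
  have := (entryCLM i j).intervalIntegral_comp_comm hf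
  exact this.symm

noncomputable def conjCLM (C C' : 𝕄) : 𝕄 →L[ℝ] 𝕄 :=
  LinearMap.toContinuousLinearMap
    { toFun := fun M => C * M * C'
      map_add' := fun x y => by simp [mul_add, add_mul]
      map_smul' := fun r x => by simp [mul_smul_comm, smul_mul_assoc] }


end

/-- `d/dt e^{θφ} = θ e^{(θ/2)φ} Ψ e^{(θ/2)φ}` with
`Ψ = ∫_{-1/2}^{1/2} e^{uθφ} ψ e^{-uθφ} du`, the integral form of
`sinhc((θ/2) ad_φ)(ψ)` (entrywise derivatives and integrals). -/
theorem stmt_16 {n : ℕ} (θ : ℝ)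
    (φ : ℝ → Matrix (Fin n) (Fin n) ℂ) (ψ : Matrix (Fin n) (Fin n) ℂ) (t : ℝ)
    (hφ : ∀ i j, HasDerivAt (fun τ => φ τ i j) (ψ i j) t)
    (Ψ : Matrix (Fin n) (Fin n) ℂ)
    (hΨ : Ψ = Matrix.of fun i j => ∫ u in (-(1 / 2) : ℝ)..(1 / 2),
      (exp (((u * θ : ℝ) : ℂ) • φ t) * ψ * exp ((-(u * θ : ℝ) : ℂ) • φ t)) i j) :
    ∀ i j, HasDerivAt (fun τ => (exp ((θ : ℂ) • φ τ)) i j)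
      (((θ : ℂ) • (exp (((θ : ℂ) / 2) • φ t) * Ψ * exp (((θ : ℂ) / 2) • φ t))) i j) t := by
  intro i j
  haveI : NeZero n := ⟨by rintro rfl; exact i.elim0⟩
  letI := uniM (n := n); letI := topM (n := n)
  set A : ℝ → Matrix (Fin n) (Fin n) ℂ := fun τ => (θ : ℂ) • φ τ with hAdef
  have hA : HasDerivAt A ((θ : ℂ) • ψ) t := by
    refine hasDerivAt_of_entries fun i' j' => ?_
    simpa [hAdef, Matrix.smul_apply, smul_eq_mul] using (hφ i' j').const_mul (θ : ℂ)
  have hE := main_deriv A ((θ : ℂ) • ψ) t hA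
  set C : Matrix (Fin n) (Fin n) ℂ := exp (((θ : ℂ) / 2) • φ t) with hCdef
  have hC : C = exp (((1 / 2 : ℝ) : ℂ) • A t) := by
    have e : ((θ : ℂ) / 2) = ((1 / 2 : ℝ) : ℂ) * θ := by push_cast; ring
    rw [hCdef, hAdef, smul_smul, ← e]
  set h : ℝ → Matrix (Fin n) (Fin n) ℂ := fun u => exp (((u : ℝ) : ℂ) • A t) * ψ * exp (((-u : ℝ) : ℂ) • A t)
    with hhdef
  have hcont : Continuous h := by
    refine ((expcont (A t)).mul continuous_const).mul ?_
    exact exp_continuous.comp ((Complex.continuous_ofReal.comp continuous_neg).smul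
      continuous_const)
  have hint : IntervalIntegrable h volume (-(1 / 2) : ℝ) (1 / 2) :=
    hcont.intervalIntegrable _ _
  have hΨeq : Ψ = ∫ u in (-(1 / 2) : ℝ)..(1 / 2), h u := by
    rw [hΨ]
    ext i' j'
    rw [Matrix.of_apply, entry_integral hint]
    refine intervalIntegral.integral_congr fun u _ => ?_
    have e1 : ((u * θ : ℝ) : ℂ) • φ t = ((u : ℝ) : ℂ) • A t := by
      rw [hAdef, smul_smul]; push_cast; ring_nf
    have e2 : (-((u * θ : ℝ) : ℂ)) • φ t = ((-u : ℝ) : ℂ) • A t := by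
      rw [hAdef, smul_smul]; push_cast; ring_nf
    rw [hhdef]
    simp only [e1, e2]
    rfl
  -- commutation helper
  have hcomm : ∀ a b : ℂ, Commute (a • A t) (b • A t) :=
    fun a b => ((Commute.refl (A t)).smul_left a).smul_right b
  have hptw : ∀ u : ℝ,
      exp (((u + 1 / 2 : ℝ) : ℂ) • A t) * ((θ : ℂ) • ψ)
          * exp (((1 - (u + 1 / 2) : ℝ) : ℂ) • A t)
        = (θ : ℂ) • (C * h u * C) := by
    intro u
    have ha : (((u + 1 / 2 : ℝ) : ℂ)) • A t
        = ((1 / 2 : ℝ) : ℂ) • A t + ((u : ℝ) : ℂ) • A t := by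
      rw [← add_smul]; push_cast; ring_nf
    have hb : (((1 - (u + 1 / 2) : ℝ) : ℂ)) • A t
        = ((-u : ℝ) : ℂ) • A t + ((1 / 2 : ℝ) : ℂ) • A t := by
      rw [← add_smul]; push_cast; ring_nf
    rw [ha, hb, exp_add_of_commute (hcomm _ _), exp_add_of_commute (hcomm _ _), hhdef, hC]
    simp only [mul_smul_comm, smul_mul_assoc]
    congr 1
    simp only [mul_assoc]
  have hcv : (∫ s in (0:ℝ)..1, exp ((s : ℂ) • A t) * ((θ : ℂ) • ψ)
      * exp (((1 - s : ℝ) : ℂ) • A t))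
      = ∫ u in (-(1 / 2) : ℝ)..(1 / 2), (θ : ℂ) • (C * h u * C) := by
    have hcvr := intervalIntegral.integral_comp_add_right (a := (-(1 / 2) : ℝ)) (b := 1 / 2)
      (fun s => exp ((s : ℂ) • A t) * ((θ : ℂ) • ψ) * exp (((1 - s : ℝ) : ℂ) • A t))
      (1 / 2)
    rw [(by norm_num : (-(1/2 : ℝ) + 1/2) = 0), (by norm_num : ((1/2 : ℝ) + 1/2) = 1)] at hcvr
    rw [← hcvr]
    exact intervalIntegral.integral_congr fun u _ => hptw u
  have hpull : (∫ u in (-(1 / 2) : ℝ)..(1 / 2), (θ : ℂ) • (C * h u * C))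
      = (θ : ℂ) • (C * Ψ * C) := by
    rw [intervalIntegral.integral_smul, hΨeq]
    congr 1
    have := (conjCLM C C).intervalIntegral_comp_comm hint
    simpa [conjCLM] using this
  rw [hcv, hpull] at hE
  exact hasDerivAt_entry hE i j
end

section
/- (Theorem 1, kernel form, part 2.) Let Λ ∈ ℝ^{n×n} be antisymmetric (regarded as a complex matrix), let F : ℝ → ℂ^{n×n} be continuous with F(t) symmetric for every t, and let S : ℝ → ℂ^{n×n} be differentiable with S'(t) = 2i Λ F(t) S(t). Suppose T : ℝ → ℂ^{n×n} is differentiable and satisfies the factorization conj(S(t)) · T(t) = S(t) for all t, where conj denotes the entrywise complex conjugate. Then conj(S(t)) · T'(t) = 4i Λ · ((F(t) + conj(F(t)))/2) · S(t) for all t. -/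
open Matrix

/-- Theorem 1, kernel form, part 2: if `S' = 2iΛFS` and
`conj(S) T = S`, then `conj(S) T' = 4iΛ ((F + conj F)/2) S`. -/
theorem stmt_18 {n : ℕ}
    (Λ : Matrix (Fin n) (Fin n) ℝ) (hΛ : Λᵀ = -Λ)
    (F : ℝ → Matrix (Fin n) (Fin n) ℂ)
    (hFcont : ∀ i j, Continuous fun t => F t i j)
    (hFsymm : ∀ t, (F t)ᵀ = F t)
    (S : ℝ → Matrix (Fin n) (Fin n) ℂ)
    (hS : ∀ t, ∀ i j, HasDerivAt (fun τ => S τ i j)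
      (((2 * Complex.I) • (Λ.map Complex.ofReal * F t * S t)) i j) t)
    (T T' : ℝ → Matrix (Fin n) (Fin n) ℂ)
    (hT : ∀ t, ∀ i j, HasDerivAt (fun τ => T τ i j) (T' t i j) t)
    (hfact : ∀ t, (S t).map (starRingEnd ℂ) * T t = S t) :
    ∀ t, (S t).map (starRingEnd ℂ) * T' t
      = (4 * Complex.I) • (Λ.map Complex.ofReal
          * (((1 : ℂ) / 2) • (F t + (F t).map (starRingEnd ℂ))) * S t) := by
  intro t
  set ΛC : Matrix (Fin n) (Fin n) ℂ := Λ.map Complex.ofReal with hΛC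
  set D : Matrix (Fin n) (Fin n) ℂ := (2 * Complex.I) • (ΛC * F t * S t) with hDdef
  -- Key derivative identity from differentiating conj(S) T = S
  have key : (S t).map (starRingEnd ℂ) * T' t + D.map (starRingEnd ℂ) * T t = D := by
    ext i j
    have h1 : HasDerivAt (fun τ => ∑ k, (starRingEnd ℂ) (S τ i k) * T τ k j)
        (∑ k, ((starRingEnd ℂ) (D i k) * T t k j
          + (starRingEnd ℂ) (S t i k) * T' t k j)) t := by
      refine HasDerivAt.fun_sum fun k _ => ?_
      have := ((hS t i k).star.fun_mul (hT t k j))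
      simpa only [starRingEnd_apply] using this
    have hfun : (fun τ => ∑ k, (starRingEnd ℂ) (S τ i k) * T τ k j)
        = fun τ => S τ i j := by
      funext τ
      have := congrFun (congrFun (hfact τ) i) j
      simpa [Matrix.mul_apply, Matrix.map_apply] using this
    rw [hfun] at h1
    have h3 : (∑ k, ((starRingEnd ℂ) (D i k) * T t k j
          + (starRingEnd ℂ) (S t i k) * T' t k j)) = D i j :=
      h1.unique (hS t i j)
    have : ((S t).map (starRingEnd ℂ) * T' t + D.map (starRingEnd ℂ) * T t) i j
        = ∑ k, ((starRingEnd ℂ) (D i k) * T t k j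
          + (starRingEnd ℂ) (S t i k) * T' t k j) := by
      simp [Matrix.add_apply, Matrix.mul_apply, Matrix.map_apply, Finset.sum_add_distrib,
        add_comm]
    rw [this, h3]
  -- conjugate of ΛC is ΛC
  have hΛconj : ΛC.map (starRingEnd ℂ) = ΛC := by
    ext i j; simp [hΛC, Matrix.map_apply]
  -- compute D.map conj * T t
  have hDconj : D.map (starRingEnd ℂ) * T t
      = (-(2 * Complex.I)) • (ΛC * (F t).map (starRingEnd ℂ) * S t) := by
    have h1 : D.map (starRingEnd ℂ)
        = (-(2 * Complex.I)) • (ΛC * (F t).map (starRingEnd ℂ) * (S t).map (starRingEnd ℂ)) := by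
      ext i j
      simp [hDdef, Matrix.map_apply, Matrix.smul_apply, Matrix.mul_apply,
        Finset.mul_sum, hΛC, Complex.conj_ofReal, map_ofNat, mul_comm, mul_left_comm, mul_assoc]
    rw [h1, Matrix.smul_mul, Matrix.mul_assoc, Matrix.mul_assoc, hfact t, ← Matrix.mul_assoc]
  have hST : (S t).map (starRingEnd ℂ) * T' t
      = D + (2 * Complex.I) • (ΛC * (F t).map (starRingEnd ℂ) * S t) := by
    have := key
    rw [hDconj] at this
    have h2 := congrArg (fun M => M + (2 * Complex.I) • (ΛC * (F t).map (starRingEnd ℂ) * S t)) this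
    simpa [add_assoc, neg_smul] using h2
  rw [hST]
  rw [Matrix.mul_smul, Matrix.smul_mul, smul_smul]
  have : (4 * Complex.I) * ((1:ℂ)/2) = 2 * Complex.I := by ring
  rw [this, hDdef]
  rw [Matrix.mul_add, Matrix.add_mul, smul_add]
end
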